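/- If P and Q are probability measures on a measure space with densities p, q with respect to μ, and Pⁿ, Qⁿ denote the n-fold product measures, then ∫ min(dPⁿ/dμⁿ, dQⁿ/dμⁿ) dμⁿ ≥ (1/2)·(1 - (1/2)H²(P,Q))^{2n}, where H² denotes the squared Hellinger distance. -/

import Mathlib

/-!
With `BC = ∫ √p √q = 1 - H²(P,Q)/2`, the product densities `F = ∏ p(xᵢ)`, `G = ∏ q(xᵢ)` satisfy
`∫ √F √G = BCⁿ`. Writing `√F √G = √(min F G) √(max F G)`, Cauchy–Schwarz gives
`BC²ⁿ ≤ ∫ min F G · ∫ max F G`, and `∫ max F G ≤ ∫ F + ∫ G = 2`.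
-/

open MeasureTheory

lemma Real.sqrt_mul_sqrt_eq_sqrt_min_mul_sqrt_max (a b : ℝ) :
    √a * √b = √(min a b) * √(max a b) := by
  rcases le_total a b with h | h
  · rw [min_eq_left h, max_eq_right h]
  · rw [min_eq_right h, max_eq_left h, mul_comm]

section

variable {α : Type*} [MeasurableSpace α] {ν : Measure α} {f g : α → ℝ}

lemma integrable_sqrt_mul_sqrt (hf0 : ∀ x, 0 ≤ f x) (hg0 : ∀ x, 0 ≤ g x)
    (hf : Integrable f ν) (hg : Integrable g ν) :
    Integrable (fun x ↦ √(f x) * √(g x)) ν := by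
  refine (hf.add hg).mono' (hf.aemeasurable.sqrt.mul hg.aemeasurable.sqrt).aestronglyMeasurable
    (.of_forall fun x ↦ ?_)
  rw [Real.norm_of_nonneg (by positivity), Pi.add_apply]
  nlinarith [two_mul_le_add_sq √(f x) √(g x), Real.sq_sqrt (hf0 x), Real.sq_sqrt (hg0 x)]

lemma integral_sqrt_sub_sqrt_sq (hf0 : ∀ x, 0 ≤ f x) (hg0 : ∀ x, 0 ≤ g x)
    (hf : Integrable f ν) (hg : Integrable g ν) :
    ∫ x, (√(f x) - √(g x)) ^ 2 ∂ν = ∫ x, f x ∂ν + ∫ x, g x ∂ν - 2 * ∫ x, √(f x) * √(g x) ∂ν := by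
  have hpoint (x : α) : (√(f x) - √(g x)) ^ 2 = f x + g x - 2 * (√(f x) * √(g x)) := by
    linear_combination Real.sq_sqrt (hf0 x) + Real.sq_sqrt (hg0 x)
  simp_rw [hpoint]
  rw [integral_sub (f := fun x ↦ f x + g x) (hf.add hg)
      ((integrable_sqrt_mul_sqrt hf0 hg0 hf hg).const_mul 2),
    integral_add hf hg, integral_const_mul]

lemma sq_integral_sqrt_mul_sqrt_le (hf0 : ∀ x, 0 ≤ f x) (hg0 : ∀ x, 0 ≤ g x)
    (hf : Integrable f ν) (hg : Integrable g ν) :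
    (∫ x, √(f x) * √(g x) ∂ν) ^ 2 ≤ (∫ x, f x ∂ν) * ∫ x, g x ∂ν := by
  have memLp_sqrt {h : α → ℝ} (h0 : ∀ x, 0 ≤ h x) (hh : Integrable h ν) :
      MemLp (fun x ↦ √(h x)) (ENNReal.ofReal 2) ν := by
    rw [ENNReal.ofReal_ofNat,
      memLp_two_iff_integrable_sq hh.aemeasurable.sqrt.aestronglyMeasurable]
    simpa only [Real.sq_sqrt (h0 _)] using hh
  have holder := integral_mul_le_Lp_mul_Lq_of_nonneg Real.HolderConjugate.two_two
    (.of_forall fun x ↦ Real.sqrt_nonneg (f x)) (.of_forall fun x ↦ Real.sqrt_nonneg (g x))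
    (memLp_sqrt hf0 hf) (memLp_sqrt hg0 hg)
  simp only [Real.rpow_two, Real.sq_sqrt (hf0 _), Real.sq_sqrt (hg0 _),
    ← Real.sqrt_eq_rpow] at holder
  calc (∫ x, √(f x) * √(g x) ∂ν) ^ 2 ≤ (√(∫ x, f x ∂ν) * √(∫ x, g x ∂ν)) ^ 2 :=
        pow_le_pow_left₀ (integral_nonneg fun x ↦ by positivity) holder 2
    _ = (∫ x, f x ∂ν) * ∫ x, g x ∂ν := by
        rw [mul_pow, Real.sq_sqrt (integral_nonneg hf0), Real.sq_sqrt (integral_nonneg hg0)]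

lemma sq_integral_sqrt_mul_sqrt_le_integral_min_mul (hf0 : ∀ x, 0 ≤ f x) (hg0 : ∀ x, 0 ≤ g x)
    (hf : Integrable f ν) (hg : Integrable g ν) :
    (∫ x, √(f x) * √(g x) ∂ν) ^ 2 ≤ (∫ x, min (f x) (g x) ∂ν) * (∫ x, f x ∂ν + ∫ x, g x ∂ν) := by
  have hmin0 (x : α) : 0 ≤ min (f x) (g x) := le_min (hf0 x) (hg0 x)
  have hmax0 (x : α) : 0 ≤ max (f x) (g x) := le_max_of_le_left (hf0 x)
  have hmax_le : ∫ x, max (f x) (g x) ∂ν ≤ ∫ x, f x ∂ν + ∫ x, g x ∂ν := by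
    rw [← integral_add hf hg]
    exact integral_mono (hf.sup hg) (hf.add hg) fun x ↦ max_le_add_of_nonneg (hf0 x) (hg0 x)
  simp_rw [Real.sqrt_mul_sqrt_eq_sqrt_min_mul_sqrt_max (f _)]
  calc _ ≤ (∫ x, min (f x) (g x) ∂ν) * ∫ x, max (f x) (g x) ∂ν :=
        sq_integral_sqrt_mul_sqrt_le hmin0 hmax0 (hf.inf hg) (hf.sup hg)
    _ ≤ _ := mul_le_mul_of_nonneg_left hmax_le (integral_nonneg hmin0)

end

theorem min_product_density_ge_general {M : Type*} [MeasurableSpace M] (μ : Measure M) [SigmaFinite μ]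
    (p q : M → ℝ) (hp0 : ∀ x, 0 ≤ p x) (hq0 : ∀ x, 0 ≤ q x)
    (hp : Integrable p μ) (hq : Integrable q μ)
    (hp1 : ∫ x, p x ∂μ = 1) (hq1 : ∫ x, q x ∂μ = 1) (n : ℕ) :
    (1 / 2) * (1 - (1 / 2) * ∫ x, (Real.sqrt (p x) - Real.sqrt (q x)) ^ 2 ∂μ) ^ (2 * n)
      ≤ ∫ x, min (∏ i, p (x i)) (∏ i, q (x i)) ∂(Measure.pi fun _ : Fin n => μ) := by
  have hH : 1 - (1 / 2) * ∫ x, (√(p x) - √(q x)) ^ 2 ∂μ = ∫ x, √(p x) * √(q x) ∂μ := by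
    rw [integral_sqrt_sub_sqrt_sq hp0 hq0 hp hq, hp1, hq1]
    ring
  have hsqrt_prod (x : Fin n → M) :
      √(∏ i, p (x i)) * √(∏ i, q (x i)) = ∏ i, √(p (x i)) * √(q (x i)) := by
    rw [Real.sqrt_prod _ fun i _ ↦ hp0 _, Real.sqrt_prod _ fun i _ ↦ hq0 _,
      Finset.prod_mul_distrib]
  have hprod_one (f : M → ℝ) (hf : ∫ x, f x ∂μ = 1) :
      ∫ x, ∏ i, f (x i) ∂(Measure.pi fun _ : Fin n => μ) = 1 := by
    rw [integral_fintype_prod_eq_pow, hf, one_pow]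
  have key := sq_integral_sqrt_mul_sqrt_le_integral_min_mul
    (ν := Measure.pi fun _ : Fin n => μ)
    (fun x ↦ Finset.prod_nonneg fun i _ ↦ hp0 (x i))
    (fun x ↦ Finset.prod_nonneg fun i _ ↦ hq0 (x i))
    (Integrable.fintype_prod fun _ ↦ hp) (Integrable.fintype_prod fun _ ↦ hq)
  simp only [hsqrt_prod, hprod_one p hp1, hprod_one q hq1] at key
  rw [integral_fintype_prod_eq_pow (fun y ↦ √(p y) * √(q y)), Fintype.card_fin] at key
  rw [hH, pow_mul']
  linarith

/-- `‖Pⁿ ∧ Qⁿ‖ ≥ (1/2)(1 - H²(P,Q)/2)^{2n}` for the `n`-fold product densities. -/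
theorem min_product_density_ge {M : Type*} [MeasurableSpace M] (μ : Measure M) [SigmaFinite μ]
    (p q : M → ℝ) (hp0 : ∀ x, 0 ≤ p x) (hq0 : ∀ x, 0 ≤ q x)
    (hp : Integrable p μ) (hq : Integrable q μ)
    (hp1 : ∫ x, p x ∂μ = 1) (hq1 : ∫ x, q x ∂μ = 1)
    (hpm : Measurable p) (hqm : Measurable q) (n : ℕ) :
    (1 / 2) * (1 - (1 / 2) * ∫ x, (Real.sqrt (p x) - Real.sqrt (q x)) ^ 2 ∂μ) ^ (2 * n)
      ≤ ∫ x, min (∏ i, p (x i)) (∏ i, q (x i)) ∂(Measure.pi fun _ : Fin n => μ) :=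
  min_product_density_ge_general μ p q hp0 hq0 hp hq hp1 hq1 n
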